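/- Optimal symmetric cloning of a pure state: let n ≥ 1, let φ ∈ ℂ^n be a unit vector, let W be the swap operator on ℂ^n ⊗ ℂ^n (W(u ⊗ v) = v ⊗ u), let S₂ = (I + W)/2, and let ρ = S₂ (φφ^† ⊗ (I_n/n)) S₂ / Tr[S₂ (φφ^† ⊗ (I_n/n)) S₂] be the normalized symmetrized state. Then both partial traces of ρ equal the same state: Tr₁(ρ) = Tr₂(ρ) = v·φφ^† + (1 − v)·(I_n/n), where v = (n+2)/(2(n+1)). -/

import Mathlib

open Matrix Kronecker

/-- The swap operator `W` on `ℂ^n ⊗ ℂ^n`, defined by `W(u ⊗ v) = v ⊗ u`. -/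
noncomputable def swapMat (n : ℕ) :
    Matrix (Fin n × Fin n) (Fin n × Fin n) ℂ :=
  fun p q => if p.1 = q.2 ∧ p.2 = q.1 then 1 else 0

/-- The projector `S₂ = (I + W)/2` onto the symmetric subspace of `ℂ^n ⊗ ℂ^n`. -/
noncomputable def symProj (n : ℕ) :
    Matrix (Fin n × Fin n) (Fin n × Fin n) ℂ :=
  (2 : ℂ)⁻¹ • ((1 : Matrix (Fin n × Fin n) (Fin n × Fin n) ℂ) + swapMat n)

/-- The (unnormalized) symmetrized extension `S₂ (φφ† ⊗ (I_n/n)) S₂`. -/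
noncomputable def symState (n : ℕ) (φ : Fin n → ℂ) :
    Matrix (Fin n × Fin n) (Fin n × Fin n) ℂ :=
  symProj n *
    (Matrix.vecMulVec φ (star φ) ⊗ₖ ((n : ℂ)⁻¹ • (1 : Matrix (Fin n) (Fin n) ℂ))) *
    symProj n

/-- Partial trace over the second tensor factor of a matrix on `ℂ^n ⊗ ℂ^n`. -/
noncomputable def ptr2 (n : ℕ) (X : Matrix (Fin n × Fin n) (Fin n × Fin n) ℂ) :
    Matrix (Fin n) (Fin n) ℂ :=
  fun i j => ∑ k : Fin n, X (i, k) (j, k)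

/-- Partial trace over the first tensor factor of a matrix on `ℂ^n ⊗ ℂ^n`. -/
noncomputable def ptr1 (n : ℕ) (X : Matrix (Fin n × Fin n) (Fin n × Fin n) ℂ) :
    Matrix (Fin n) (Fin n) ℂ :=
  fun k l => ∑ i : Fin n, X (i, k) (i, l)

lemma swap_mul' {n : ℕ} (M : Matrix (Fin n × Fin n) (Fin n × Fin n) ℂ) (p q) :
    (swapMat n * M) p q = M (p.2, p.1) q := by
  rw [Matrix.mul_apply, Fintype.sum_prod_type]
  simp [swapMat, ite_and]

lemma mul_swap' {n : ℕ} (M : Matrix (Fin n × Fin n) (Fin n × Fin n) ℂ) (p q) :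
    (M * swapMat n) p q = M p (q.2, q.1) := by
  rw [Matrix.mul_apply, Fintype.sum_prod_type]
  simp [swapMat, ite_and]

lemma symState_apply' (n : ℕ) (φ : Fin n → ℂ) (i k j l : Fin n) :
    symState n φ (i, k) (j, l) =
      (4 * n : ℂ)⁻¹ *
        (φ i * (starRingEnd ℂ) (φ j) * (if k = l then 1 else 0) +
         φ k * (starRingEnd ℂ) (φ j) * (if i = l then 1 else 0) +
         φ i * (starRingEnd ℂ) (φ l) * (if k = j then 1 else 0) +
         φ k * (starRingEnd ℂ) (φ l) * (if i = j then 1 else 0)) := by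
  simp only [symState, symProj, Matrix.smul_mul, Matrix.mul_smul, Matrix.add_mul,
    Matrix.mul_add, Matrix.one_mul, Matrix.mul_one, Matrix.smul_apply, Matrix.add_apply,
    swap_mul', mul_swap', Matrix.kroneckerMap_apply, Matrix.vecMulVec_apply, Pi.star_apply,
    Matrix.smul_apply, Matrix.one_apply, smul_eq_mul]
  simp only [Complex.star_def, mul_inv]
  ring

lemma symState_trace' (n : ℕ) (hn : 1 ≤ n) (φ : Fin n → ℂ)
    (hunit : star φ ⬝ᵥ φ = 1) :
    (symState n φ).trace = ((n : ℂ) + 1) / (2 * n) := by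
  have h1 : ∑ i, (starRingEnd ℂ) (φ i) * φ i = 1 := by
    simpa [dotProduct] using hunit
  have hn0 : (n : ℂ) ≠ 0 := by
    exact_mod_cast Nat.cast_ne_zero.mpr (by omega)
  rw [Matrix.trace]
  simp only [Matrix.diag_apply]
  rw [Fintype.sum_prod_type]
  simp only [symState_apply']
  simp only [if_true, mul_one, eq_self_iff_true, ← Finset.mul_sum,
    Finset.sum_add_distrib, mul_ite, mul_zero, Finset.sum_ite_eq, Finset.sum_ite_eq',
    Finset.mem_univ, if_pos, Finset.sum_const, Finset.card_univ, Fintype.card_fin,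
    nsmul_eq_mul]
  have h2 : ∑ x, φ x * (starRingEnd ℂ) (φ x) = 1 := by
    simpa [mul_comm] using h1
  have h3 : ∑ x : Fin n, φ x * ((n : ℂ) * (starRingEnd ℂ) (φ x)) = n := by
    have : ∑ x : Fin n, φ x * ((n : ℂ) * (starRingEnd ℂ) (φ x)) =
        (n : ℂ) * ∑ x : Fin n, φ x * (starRingEnd ℂ) (φ x) := by
      rw [Finset.mul_sum]; exact Finset.sum_congr rfl fun x _ => by ring
    rw [this, h2, mul_one]
  rw [h2, h3]
  field_simp
  ring

lemma ptr2_symState' (n : ℕ) (φ : Fin n → ℂ) (i j : Fin n) :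
    ptr2 n (symState n φ) i j =
      (4 * n : ℂ)⁻¹ * (((n : ℂ) + 2) * (φ i * (starRingEnd ℂ) (φ j)) +
        (if i = j then 1 else 0) * ∑ x : Fin n, φ x * (starRingEnd ℂ) (φ x)) := by
  rw [ptr2]
  simp only [symState_apply']
  simp only [if_true, eq_self_iff_true, mul_one, ← Finset.mul_sum,
    Finset.sum_add_distrib, mul_ite, mul_zero, Finset.sum_ite_eq, Finset.sum_ite_eq',
    Finset.mem_univ, if_pos, Finset.sum_const, Finset.card_univ, Fintype.card_fin,
    nsmul_eq_mul, Finset.sum_ite_irrel, Finset.sum_const_zero]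
  split_ifs <;> ring_nf <;> simp [Finset.mul_sum] <;> ring_nf

lemma ptr1_symState' (n : ℕ) (φ : Fin n → ℂ) (k l : Fin n) :
    ptr1 n (symState n φ) k l =
      (4 * n : ℂ)⁻¹ * (((n : ℂ) + 2) * (φ k * (starRingEnd ℂ) (φ l)) +
        (if k = l then 1 else 0) * ∑ x : Fin n, φ x * (starRingEnd ℂ) (φ x)) := by
  rw [ptr1]
  simp only [symState_apply']
  simp only [if_true, eq_self_iff_true, mul_one, ← Finset.mul_sum,
    Finset.sum_add_distrib, mul_ite, mul_zero, Finset.sum_ite_eq, Finset.sum_ite_eq',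
    Finset.mem_univ, if_pos, Finset.sum_const, Finset.card_univ, Fintype.card_fin,
    nsmul_eq_mul, Finset.sum_ite_irrel, Finset.sum_const_zero]
  split_ifs <;> ring_nf <;> simp [Finset.mul_sum] <;> ring_nf

/-- Optimal symmetric cloning of a pure state: for a unit vector `φ ∈ ℂ^n`, the
normalized symmetrized state
`ρ = S₂ (φφ† ⊗ (I_n/n)) S₂ / Tr[S₂ (φφ† ⊗ (I_n/n)) S₂]`
has both partial traces equal to `v·φφ† + (1 − v)·(I_n/n)` with
`v = (n+2)/(2(n+1))`. -/
theorem optimal_cloning_partial_traces (n : ℕ) (hn : 1 ≤ n) (φ : Fin n → ℂ)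
    (hunit : star φ ⬝ᵥ φ = 1) :
    ptr1 n (((symState n φ).trace)⁻¹ • symState n φ) =
      ptr2 n (((symState n φ).trace)⁻¹ • symState n φ) ∧
    ptr2 n (((symState n φ).trace)⁻¹ • symState n φ) =
      (((n : ℂ) + 2) / (2 * ((n : ℂ) + 1))) • Matrix.vecMulVec φ (star φ) +
        (1 - ((n : ℂ) + 2) / (2 * ((n : ℂ) + 1))) •
          ((n : ℂ)⁻¹ • (1 : Matrix (Fin n) (Fin n) ℂ)) := by
  have hn0 : (n : ℂ) ≠ 0 := Nat.cast_ne_zero.mpr (by omega)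
  have hn1 : (n : ℂ) + 1 ≠ 0 := by
    have : ((n + 1 : ℕ) : ℂ) ≠ 0 := Nat.cast_ne_zero.mpr (by omega)
    simpa using this
  have h2 : ∑ x : Fin n, φ x * (starRingEnd ℂ) (φ x) = 1 := by
    have h1 : ∑ i, (starRingEnd ℂ) (φ i) * φ i = 1 := by
      simpa [dotProduct] using hunit
    simpa [mul_comm] using h1
  have htr := symState_trace' n hn φ hunit
  have e1 : ∀ (c : ℂ) X, ptr1 n (c • X) = c • ptr1 n X := by
    intro c X; funext k l; simp [ptr1, Finset.mul_sum]
  have e2 : ∀ (c : ℂ) X, ptr2 n (c • X) = c • ptr2 n X := by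
    intro c X; funext i j; simp [ptr2, Finset.mul_sum]
  constructor
  · rw [e1, e2]
    congr 1
    funext a b
    rw [ptr1_symState', ptr2_symState']
  · rw [e2, htr]
    funext a b
    rw [Matrix.smul_apply, ptr2_symState', h2, mul_one]
    simp only [Matrix.add_apply, Matrix.smul_apply, Matrix.vecMulVec_apply, Pi.star_apply,
      Matrix.one_apply, smul_eq_mul, Complex.star_def]
    split_ifs <;> field_simp <;> ring
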